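/- arXiv:2106.04579 — 2 statements merged into one kernel-verified Lean document; each statement's English description precedes it below -/
import Mathlib

section
/- Every 2-Sylow subgroup of SL(2, Z/7Z) is isomorphic to the generalized quaternion group Q16 of order 16. -/
namespace Stmt3Aux

abbrev G7 := Matrix.SpecialLinearGroup (Fin 2) (ZMod 7)

instance : DecidableEq G7 := fun x y =>
  decidable_of_iff (x.1 = y.1) (Subtype.ext_iff).symm

def Amat : G7 := ⟨!![0,1;6,3], by decide⟩
def Bmat : G7 := ⟨!![1,5;1,6], by decide⟩

def f : QuaternionGroup 4 → G7
  | .a i => Amat ^ i.val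
  | .xa i => Bmat * Amat ^ i.val

lemma f_mul : ∀ x y : QuaternionGroup 4, f (x * y) = f x * f y := by decide

lemma f_inj : Function.Injective f := by decide

def fhom : QuaternionGroup 4 →* G7 := MonoidHom.mk' f f_mul

set_option maxRecDepth 10000 in
lemma cardG7 : Nat.card G7 = 336 := by
  rw [Nat.card_eq_fintype_card]; decide

lemma cardQ : Nat.card (QuaternionGroup 4) = 16 := by
  rw [Nat.card_eq_fintype_card, QuaternionGroup.card]

noncomputable def e0 : QuaternionGroup 4 ≃* fhom.range := MonoidHom.ofInjective f_inj

lemma card_range : Nat.card fhom.range = 2 ^ (Nat.card G7).factorization 2 := by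
  haveI : Fact (Nat.Prime 2) := ⟨by norm_num⟩
  have h336 : (336 : ℕ) = 2 ^ 4 * 21 := by norm_num
  rw [← Nat.card_congr e0.toEquiv, cardQ, cardG7,
    Nat.factorization_def _ (by norm_num), h336,
    padicValNat.mul (by norm_num) (by norm_num), padicValNat.prime_pow,
    padicValNat.eq_zero_of_not_dvd (by norm_num)]
  norm_num

noncomputable def theSylow : Sylow 2 G7 := Sylow.ofCard fhom.range card_range

lemma coe_theSylow : (theSylow : Subgroup G7) = fhom.range := rfl

end Stmt3Aux

theorem stmt_3 (P : Sylow 2 (Matrix.SpecialLinearGroup (Fin 2) (ZMod 7))) :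
    Nat.card (P : Subgroup (Matrix.SpecialLinearGroup (Fin 2) (ZMod 7))) = 16 ∧
      Nonempty ((P : Subgroup (Matrix.SpecialLinearGroup (Fin 2) (ZMod 7))) ≃* QuaternionGroup 4) := by
  haveI : Fact (Nat.Prime 2) := ⟨by norm_num⟩
  have e1 := P.equiv Stmt3Aux.theSylow
  have e2 : (P : Subgroup (Matrix.SpecialLinearGroup (Fin 2) (ZMod 7))) ≃* QuaternionGroup 4 :=
    (e1.trans (MulEquiv.subgroupCongr Stmt3Aux.coe_theSylow)).trans Stmt3Aux.e0.symm
  exact ⟨by rw [Nat.card_congr e2.toEquiv, Stmt3Aux.cardQ], ⟨e2⟩⟩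
end

section
/- There is no abelian subgroup of SL(2, Z/7Z) of order 12 containing φ = [[0,-1],[1,-1]] and -I and isomorphic to Z/3Z × Z/4Z or Z/3Z × (Z/2Z)². -/
set_option maxRecDepth 10000

instance SL27.deq : DecidableEq (Matrix.SpecialLinearGroup (Fin 2) (ZMod 7)) :=
  inferInstanceAs (DecidableEq {m : Matrix (Fin 2) (Fin 2) (ZMod 7) // m.det = 1})

def φ₀ : Matrix.SpecialLinearGroup (Fin 2) (ZMod 7) := ⟨!![0,-1;1,-1], by decide⟩

lemma card_comm : Fintype.card {g : Matrix.SpecialLinearGroup (Fin 2) (ZMod 7) // g * φ₀ = φ₀ * g} = 6 := by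
  decide

theorem stmt_12 (φ : Matrix.SpecialLinearGroup (Fin 2) (ZMod 7))
    (hφ : (φ : Matrix (Fin 2) (Fin 2) (ZMod 7)) = !![0, -1; 1, -1]) :
    ¬ ∃ H : Subgroup (Matrix.SpecialLinearGroup (Fin 2) (ZMod 7)),
      φ ∈ H ∧ (-1 : Matrix.SpecialLinearGroup (Fin 2) (ZMod 7)) ∈ H ∧
      (∀ a b : H, a * b = b * a) ∧
      (Nonempty (H ≃* Multiplicative (ZMod 12)) ∨
        Nonempty (H ≃* Multiplicative (ZMod 6) × Multiplicative (ZMod 2))) := by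
  rintro ⟨H, hφH, hnegH, hab, hiso⟩
  have hφ0 : φ = φ₀ := Subtype.ext hφ
  subst hφ0
  have hcard : Nat.card H = 12 := by
    obtain e | e := hiso
    · have := Nat.card_congr e.some.toEquiv
      simpa [Nat.card_eq_fintype_card] using this
    · have := Nat.card_congr e.some.toEquiv
      simpa [Nat.card_eq_fintype_card] using this
  have hinj : Function.Injective
      (fun h : H => (⟨h.1, by
        have := hab h ⟨φ₀, hφH⟩
        exact congrArg Subtype.val this⟩ :
        {g : Matrix.SpecialLinearGroup (Fin 2) (ZMod 7) // g * φ₀ = φ₀ * g})) := by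
    intro a b h
    have h1 := congrArg (Subtype.val : {g : Matrix.SpecialLinearGroup (Fin 2) (ZMod 7) // g * φ₀ = φ₀ * g} → _) h
    exact Subtype.ext h1
  have hle := Nat.card_le_card_of_injective _ hinj
  rw [hcard, Nat.card_eq_fintype_card, card_comm] at hle
  omega
end
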